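/- For every continuously differentiable, compactly supported function f : ℝ³ → ℂ and every x ∈ ℝ³, one has ∫_{ℝ³} |f(y)|/|x−y|² dy ≤ ∫_{ℝ³} |∇f(y)|/|x−y| dy. In particular sup_{x ∈ ℝ³} ∫_{ℝ³} |f(y)|/|x−y|² dy ≤ ‖∇f‖_K, where ‖·‖_K is the Kato norm. -/

import Mathlib

set_option autoImplicit false

open MeasureTheory ENNReal

noncomputable section

/-- `ℝ³` as a Euclidean space. -/
abbrev R3 : Type := EuclideanSpace ℝ (Fin 3)

/-- The (global) Kato norm of a function `V` on `ℝ³`: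
`‖V‖_K = sup_y ∫ |V(x)| / |x - y| dx`. -/
def katoNorm {E : Type*} [NormedAddCommGroup E] (V : R3 → E) : ℝ≥0∞ :=
  ⨆ y : R3, ∫⁻ x : R3, (‖V x‖₊ : ℝ≥0∞) / (‖x - y‖₊ : ℝ≥0∞)

/-!
In polar coordinates `y = x + r ω` around `x` the left-hand side becomes
`∫_{S²} ∫_0^∞ |f(x + s ω)| ds dω` and the right-hand side `∫_{S²} ∫_0^∞ r |∇f(x + r ω)| dr dω`:
the Jacobian `r²` cancels `|x - y|⁻²`, resp. leaves one factor `r`. On each ray, the fundamental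
theorem of calculus gives `|f(x + s ω)| ≤ ∫_s^∞ |∇f(x + r ω)| dr` by compact support, and
integrating over `s > 0` and exchanging the order of integration produces the weight `r`.
-/

open Set Metric Module Topology

section Polar

variable {E : Type*} [NormedAddCommGroup E] [NormedSpace ℝ E] [FiniteDimensional ℝ E]
  [MeasurableSpace E] [BorelSpace E] [Nontrivial E] (μ : Measure E) [μ.IsAddHaarMeasure]

theorem lintegral_eq_lintegral_toSphere_lintegral_Ioi (φ : E → ℝ≥0∞) (hφ : Measurable φ) :
    ∫⁻ z, φ z ∂μ = ∫⁻ ω : sphere (0 : E) 1, (∫⁻ r in Ioi (0 : ℝ),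
      ENNReal.ofReal (r ^ (finrank ℝ E - 1)) * φ (r • (ω : E))) ∂μ.toSphere := by
  have hφ' : Measurable fun p : sphere (0 : E) 1 × Ioi (0 : ℝ) => φ ((p.2 : ℝ) • (p.1 : E)) :=
    hφ.comp (by fun_prop)
  calc ∫⁻ z, φ z ∂μ = ∫⁻ z : ({0}ᶜ : Set E), φ z ∂(μ.comap Subtype.val) := by
        rw [lintegral_subtype_comap (measurableSet_singleton 0).compl, restrict_compl_singleton]
    _ = ∫⁻ p, φ ((p.2 : ℝ) • (p.1 : E))
          ∂(μ.toSphere.prod (Measure.volumeIoiPow (finrank ℝ E - 1))) := by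
        rw [← (μ.measurePreserving_homeomorphUnitSphereProd).lintegral_comp hφ']
        refine lintegral_congr fun z => ?_
        simp [smul_smul, mul_inv_cancel₀ (norm_ne_zero_iff.2 z.2)]
    _ = _ := by
        rw [lintegral_prod _ hφ'.aemeasurable]
        refine lintegral_congr fun ω => ?_
        have hφω : Measurable fun r : Ioi (0 : ℝ) => φ ((r : ℝ) • (ω : E)) := hφ.comp (by fun_prop)
        rw [Measure.volumeIoiPow, lintegral_withDensity_eq_lintegral_mul _ (by fun_prop) hφω]
        exact lintegral_subtype_comap measurableSet_Ioi
          fun r : ℝ => ENNReal.ofReal (r ^ (finrank ℝ E - 1)) * φ (r • (ω : E))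

theorem lintegral_div_enorm_sub_pow_eq (φ : E → ℝ≥0∞) (hφ : Measurable φ) (x : E) {k : ℕ}
    (hk : k < finrank ℝ E) :
    ∫⁻ y, φ y / ‖x - y‖ₑ ^ k ∂μ = ∫⁻ ω : sphere (0 : E) 1, (∫⁻ r in Ioi (0 : ℝ),
      ENNReal.ofReal (r ^ (finrank ℝ E - 1 - k)) * φ (x + r • (ω : E))) ∂μ.toSphere := by
  rw [← lintegral_add_left_eq_self _ x, lintegral_eq_lintegral_toSphere_lintegral_Ioi μ _
    (by fun_prop)]
  refine lintegral_congr fun ω => setLIntegral_congr_fun measurableSet_Ioi fun r (hr : 0 < r) => ?_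
  have hnorm : ‖x - (x + r • (ω : E))‖ₑ = ENNReal.ofReal r := by
    rw [sub_add_cancel_left, enorm_neg, ← ofReal_norm, norm_smul, norm_eq_of_mem_sphere ω,
      mul_one, Real.norm_of_nonneg hr.le]
  obtain ⟨n, hn⟩ := Nat.exists_eq_add_of_le (show k ≤ finrank ℝ E - 1 by omega)
  rw [hnorm, hn, Nat.add_sub_cancel_left, pow_add, ENNReal.ofReal_mul (by positivity),
    ENNReal.ofReal_pow hr.le k, mul_comm (ENNReal.ofReal r ^ k), mul_assoc,
    ENNReal.mul_div_cancel (by positivity) (by simp)]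

end Polar

theorem lintegral_Ioi_lintegral_Ioi (F : ℝ → ℝ≥0∞) (hF : Measurable F) :
    ∫⁻ s in Ioi (0 : ℝ), ∫⁻ r in Ioi s, F r = ∫⁻ r in Ioi (0 : ℝ), ENNReal.ofReal r * F r := by
  have hmeas : Measurable fun p : ℝ × ℝ => (Ioi p.1).indicator F p.2 := by
    simp only [indicator_apply, mem_Ioi]
    exact Measurable.ite (measurableSet_lt measurable_fst measurable_snd) (hF.comp measurable_snd)
      measurable_const
  calc ∫⁻ s in Ioi (0 : ℝ), ∫⁻ r in Ioi s, F r
      = ∫⁻ s in Ioi (0 : ℝ), ∫⁻ r in Ioi 0, (Ioi s).indicator F r := by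
        refine setLIntegral_congr_fun measurableSet_Ioi fun s (hs : 0 < s) => ?_
        rw [lintegral_indicator measurableSet_Ioi, Measure.restrict_restrict measurableSet_Ioi,
          Ioi_inter_Ioi, sup_of_le_left hs.le]
    _ = ∫⁻ r in Ioi (0 : ℝ), ∫⁻ s in Ioi 0, (Ioi s).indicator F r :=
        lintegral_lintegral_swap hmeas.aemeasurable
    _ = ∫⁻ r in Ioi (0 : ℝ), ENNReal.ofReal r * F r := by
        refine setLIntegral_congr_fun measurableSet_Ioi fun r (hr : 0 < r) => ?_
        have hind : (fun s => (Ioi s).indicator F r) = (Iio r).indicator fun _ => F r := by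
          ext s; simp [indicator_apply]
        rw [hind, lintegral_indicator measurableSet_Iio, setLIntegral_const,
          Measure.restrict_apply measurableSet_Iio, Iio_inter_Ioi, Real.volume_Ioo, sub_zero,
          mul_comm]

theorem HasCompactSupport.enorm_le_lintegral_Ioi_enorm_deriv {F : Type*} [NormedAddCommGroup F]
    [NormedSpace ℝ F] [CompleteSpace F] {g : ℝ → F} (hg : ContDiff ℝ 1 g)
    (hsupp : HasCompactSupport g) (s : ℝ) :
    ‖g s‖ₑ ≤ ∫⁻ r in Ioi s, ‖deriv g r‖ₑ := by
  simpa [hsupp.integral_Ioi_deriv_eq hg s] using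
    enorm_integral_le_lintegral_enorm (μ := volume.restrict (Ioi s)) (deriv g)

theorem HasCompactSupport.enorm_le_lintegral_Ioi_enorm_fderiv {E F : Type*}
    [NormedAddCommGroup E] [NormedSpace ℝ E] [FiniteDimensional ℝ E]
    [NormedAddCommGroup F] [NormedSpace ℝ F] [CompleteSpace F] {f : E → F}
    (hf : ContDiff ℝ 1 f) (hsupp : HasCompactSupport f) (x : E) {ω : E} (hω : ‖ω‖ = 1) (s : ℝ) :
    ‖f (x + s • ω)‖ₑ ≤ ∫⁻ r in Ioi s, ‖fderiv ℝ f (x + r • ω)‖ₑ := by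
  have hline : IsClosedEmbedding fun r : ℝ => x + r • ω :=
    (Homeomorph.addLeft x).isClosedEmbedding.comp
      (isClosedEmbedding_smul_left (norm_ne_zero_iff.1 (hω ▸ one_ne_zero)))
  have hderiv (r : ℝ) : deriv (fun r : ℝ => f (x + r • ω)) r = fderiv ℝ f (x + r • ω) ω := by
    have hl : HasDerivAt (fun r : ℝ => x + r • ω) ω r := by
      simpa using ((hasDerivAt_id r).smul_const ω).const_add x
    exact ((hf.differentiable one_ne_zero _).hasFDerivAt.comp_hasDerivAt r hl).deriv
  have hg : ContDiff ℝ 1 fun r : ℝ => f (x + r • ω) := hf.comp (by fun_prop)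
  refine (HasCompactSupport.enorm_le_lintegral_Ioi_enorm_deriv hg
    (hsupp.comp_isClosedEmbedding hline) s).trans (lintegral_mono fun r => ?_)
  rw [hderiv]
  simpa [← ofReal_norm, hω] using (fderiv ℝ f (x + r • ω)).le_opENorm ω

section SingularKernel

variable {E F : Type*} [NormedAddCommGroup E] [MeasurableSpace E] {μ : Measure E}
  [NormedAddCommGroup F]

/-- Only almost everywhere: at `y = x` the left integrand is `‖g x‖ₑ / 0 = ∞` (for `k > 0`),
while the real quotient is `‖g x‖ / 0 = 0`. -/
theorem lintegral_enorm_div_enorm_sub_pow_eq_ofReal [NullSingletonClass μ] (g : E → F) (x : E)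
    (k : ℕ) :
    ∫⁻ y, ‖g y‖ₑ / ‖x - y‖ₑ ^ k ∂μ = ∫⁻ y, ENNReal.ofReal (‖g y‖ / ‖x - y‖ ^ k) ∂μ := by
  refine lintegral_congr_ae ?_
  filter_upwards [compl_mem_ae_iff.2 (measure_singleton x)] with y (hy : y ≠ x)
  have hxy : 0 < ‖x - y‖ := norm_pos_iff.2 (sub_ne_zero.2 hy.symm)
  rw [ENNReal.ofReal_div_of_pos (by positivity), ENNReal.ofReal_pow hxy.le, ofReal_norm,
    ofReal_norm]

theorem integral_norm_div_norm_sub_pow_eq_toReal [OpensMeasurableSpace E] [NullSingletonClass μ]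
    {g : E → F} (hg : AEStronglyMeasurable g μ) (x : E) (k : ℕ) :
    ∫ y, ‖g y‖ / ‖x - y‖ ^ k ∂μ = (∫⁻ y, ‖g y‖ₑ / ‖x - y‖ₑ ^ k ∂μ).toReal := by
  rw [lintegral_enorm_div_enorm_sub_pow_eq_ofReal, integral_eq_lintegral_of_nonneg_ae
    (ae_of_all _ fun _ => by positivity)]
  exact (hg.norm.aemeasurable.div
    ((continuous_const.sub continuous_id).norm.pow k).aemeasurable).aestronglyMeasurable

variable [NormedSpace ℝ E] [FiniteDimensional ℝ E] [BorelSpace E] [μ.IsAddHaarMeasure]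

theorem HasCompactSupport.lintegral_enorm_div_enorm_sub_pow_lt_top {g : E → F}
    (hg : Continuous g) (hsupp : HasCompactSupport g) (x : E) {k : ℕ} (hk : k < finrank ℝ E) :
    ∫⁻ y, ‖g y‖ₑ / ‖x - y‖ₑ ^ k ∂μ < ∞ := by
  have : Nontrivial E := Module.nontrivial_of_finrank_pos (R := ℝ) (by omega)
  have hloc : LocallyIntegrable (fun z : E => (‖z‖ ^ k)⁻¹) μ := by
    refine locallyIntegrable_of_norm_le_rpow (C := 1) (α := k) (by omega) (by exact_mod_cast hk)
      (ae_of_all _ fun z => ?_) (by fun_prop)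
    simp [Real.rpow_neg (norm_nonneg z)]
  have hint : Integrable (fun y => ‖g y‖ / ‖x - y‖ ^ k) μ := by
    have := (hloc.integrable_smul_left_of_hasCompactSupport (hg.norm.comp (continuous_add_const x))
      (hsupp.norm.comp_homeomorph (Homeomorph.addRight x))).comp_sub_right x
    simpa [norm_sub_rev, div_eq_mul_inv] using this
  rw [lintegral_enorm_div_enorm_sub_pow_eq_ofReal]
  exact hint.lintegral_lt_top

end SingularKernel

theorem lintegral_enorm_div_enorm_sub_sq_le_lintegral_enorm_fderiv_div {F : Type*}
    [NormedAddCommGroup F] [NormedSpace ℝ F] [CompleteSpace F] {f : R3 → F}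
    (hf : ContDiff ℝ 1 f) (hsupp : HasCompactSupport f) (x : R3) :
    ∫⁻ y, ‖f y‖ₑ / ‖x - y‖ₑ ^ 2 ≤ ∫⁻ y, ‖fderiv ℝ f y‖ₑ / ‖x - y‖ₑ := by
  have hdim : finrank ℝ R3 = 3 := finrank_euclideanSpace_fin
  have hDf : Continuous (fderiv ℝ f) := hf.continuous_fderiv one_ne_zero
  calc ∫⁻ y, ‖f y‖ₑ / ‖x - y‖ₑ ^ 2
      = ∫⁻ ω : sphere (0 : R3) 1, (∫⁻ s in Ioi (0 : ℝ), ‖f (x + s • (ω : R3))‖ₑ)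
          ∂volume.toSphere := by
        rw [lintegral_div_enorm_sub_pow_eq volume (fun y => ‖f y‖ₑ)
          (continuous_enorm.comp hf.continuous).measurable x (by omega)]
        simp [hdim]
    _ ≤ ∫⁻ ω : sphere (0 : R3) 1, (∫⁻ s in Ioi (0 : ℝ), ∫⁻ r in Ioi s,
          ‖fderiv ℝ f (x + r • (ω : R3))‖ₑ) ∂volume.toSphere :=
        lintegral_mono fun ω => lintegral_mono fun s =>
          hsupp.enorm_le_lintegral_Ioi_enorm_fderiv hf x (norm_eq_of_mem_sphere ω) s
    _ = ∫⁻ ω : sphere (0 : R3) 1, (∫⁻ r in Ioi (0 : ℝ),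
          ENNReal.ofReal r * ‖fderiv ℝ f (x + r • (ω : R3))‖ₑ) ∂volume.toSphere :=
        lintegral_congr fun ω => lintegral_Ioi_lintegral_Ioi
          (fun r => ‖fderiv ℝ f (x + r • (ω : R3))‖ₑ)
          (continuous_enorm.comp (hDf.comp (by fun_prop))).measurable
    _ = ∫⁻ y, ‖fderiv ℝ f y‖ₑ / ‖x - y‖ₑ := by
        simpa [hdim] using
          (lintegral_div_enorm_sub_pow_eq volume (fun y => ‖fderiv ℝ f y‖ₑ)
            (continuous_enorm.comp hDf).measurable x (k := 1) (by omega)).symm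

theorem kato_sob (f : R3 → ℂ) (hf : ContDiff ℝ 1 f) (hsupp : HasCompactSupport f) :
    (∀ x : R3, ∫ y : R3, ‖f y‖ / ‖x - y‖ ^ 2 ≤ ∫ y : R3, ‖fderiv ℝ f y‖ / ‖x - y‖) ∧
    (⨆ x : R3, ∫⁻ y : R3, (‖f y‖₊ : ℝ≥0∞) / (‖x - y‖₊ : ℝ≥0∞) ^ 2) ≤
      katoNorm (fun y => fderiv ℝ f y) := by
  have hdim : finrank ℝ R3 = 3 := finrank_euclideanSpace_fin
  have key := lintegral_enorm_div_enorm_sub_sq_le_lintegral_enorm_fderiv_div hf hsupp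
  refine ⟨fun x => ?_, iSup_le fun x => le_iSup_of_le x ((key x).trans_eq ?_)⟩
  · have hDf : Continuous (fderiv ℝ f) := hf.continuous_fderiv one_ne_zero
    have hfin := (hsupp.fderiv ℝ).lintegral_enorm_div_enorm_sub_pow_lt_top hDf x (μ := volume)
      (k := 1) (by omega)
    simp only [pow_one] at hfin
    have hL := integral_norm_div_norm_sub_pow_eq_toReal hf.continuous.aestronglyMeasurable x 2
      (μ := volume)
    have hR : ∫ y, ‖fderiv ℝ f y‖ / ‖x - y‖ = (∫⁻ y, ‖fderiv ℝ f y‖ₑ / ‖x - y‖ₑ).toReal := by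
      simpa using integral_norm_div_norm_sub_pow_eq_toReal hDf.aestronglyMeasurable x 1
        (μ := volume)
    rw [hL, hR]
    exact ENNReal.toReal_mono hfin.ne (key x)
  · simp_rw [enorm_sub_rev x]
    rfl
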